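/- In the diffusive regime p/(1-r) < 3/4, the position of the ERWS satisfies S_n / n → 0 almost surely. -/

import Mathlib

open MeasureTheory Filter Real Topology

noncomputable section

/-- The elephant random walk with stops (ERWS): a sequence of steps `X n` (for `n ≥ 1`),
adapted to a filtration `F`, with values in `{-1, 0, 1}`, prescribed first-step law and
prescribed conditional first and second moments of the steps. -/
structure ERWS {Ω : Type*} [m0 : MeasurableSpace Ω] (μ : Measure Ω) (p q s : ℝ) where
  X : ℕ → Ω → ℝ
  F : MeasureTheory.Filtration ℕ m0
  adapted : ∀ n, 1 ≤ n → StronglyMeasurable[F n] (X n)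
  val_mem : ∀ n, 1 ≤ n → ∀ ω, X n ω = -1 ∨ X n ω = 0 ∨ X n ω = 1
  init_one : μ {ω | X 1 ω = 1} = ENNReal.ofReal s
  init_neg : μ {ω | X 1 ω = -1} = ENNReal.ofReal (1 - s)
  cond_one : ∀ n, 1 ≤ n →
    μ[X (n + 1)|F n] =ᵐ[μ] fun ω => (p - q) * (∑ k ∈ Finset.Icc 1 n, X k ω) / n
  cond_two : ∀ n, 1 ≤ n →
    μ[fun ω => (X (n + 1) ω) ^ 2|F n] =ᵐ[μ]
      fun ω => (p + q) * (∑ k ∈ Finset.Icc 1 n, (X k ω) ^ 2) / n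

namespace ERWS

variable {Ω : Type*} [m0 : MeasurableSpace Ω] {μ : Measure Ω} {p q s : ℝ}

/-- The position `S n = X 1 + ⋯ + X n` of the ERWS. -/
def S (e : ERWS μ p q s) (n : ℕ) (ω : Ω) : ℝ := ∑ k ∈ Finset.Icc 1 n, e.X k ω

/-- The number of nonzero steps `Σ n = X 1 ² + ⋯ + X n ²` of the ERWS. -/
def Sig (e : ERWS μ p q s) (n : ℕ) (ω : Ω) : ℝ := ∑ k ∈ Finset.Icc 1 n, (e.X k ω) ^ 2

end ERWS

/-!
Subtracting from `S` its accumulated conditional drift gives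
`S n = M n + (p - q) * ∑_{k < n} S k / k` with `M` a martingale whose increments are bounded
by `2`. Orthogonality of the increments gives `E[M n ^ 2] ≤ 4 n`, so by Chebyshev and
Borel–Cantelli `M (n ^ 2) / n ^ 2 → 0` a.s., and the bounded increments fill the gaps between
consecutive squares. Then `a n = S n / n` is `M n / n` plus `p - q` times the Cesàro mean of
`a`; since `|p - q| ≤ p + q = 1 - r < 1`, each pass through this identity shrinks an eventual
bound on `|a n|` by a fixed factor `< 1`, so `a n → 0`.
-/

open Finset

theorem abs_sub_le_mul_of_abs_succ_sub_le {M : ℕ → ℝ} {C : ℝ}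
    (hinc : ∀ n, |M (n + 1) - M n| ≤ C) {a b : ℕ} (hab : a ≤ b) :
    |M b - M a| ≤ C * (b - a : ℕ) := by
  have h := dist_le_Ico_sum_of_dist_le (f := M) hab (d := fun _ => C) fun {k} _ _ => by
    rw [dist_comm, Real.dist_eq]; exact hinc k
  rw [Real.dist_eq, abs_sub_comm, sum_const, Nat.card_Ico, nsmul_eq_mul] at h
  linarith

theorem abs_le_mul_of_abs_succ_sub_le {M : ℕ → ℝ} {C : ℝ} (hM0 : M 0 = 0)
    (hinc : ∀ n, |M (n + 1) - M n| ≤ C) (n : ℕ) : |M n| ≤ C * n := by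
  simpa [hM0] using abs_sub_le_mul_of_abs_succ_sub_le hinc (Nat.zero_le n)

theorem tendsto_div_of_tendsto_div_sq {M : ℕ → ℝ} {C : ℝ}
    (hinc : ∀ n, |M (n + 1) - M n| ≤ C)
    (hsq : Tendsto (fun n : ℕ => M (n ^ 2) / (n : ℝ) ^ 2) atTop (𝓝 0)) :
    Tendsto (fun n : ℕ => M n / n) atTop (𝓝 0) := by
  have hsqrt : Tendsto Nat.sqrt atTop atTop :=
    tendsto_atTop_atTop.2 fun b => ⟨b * b, fun m hm => Nat.le_sqrt.2 hm⟩
  have hC : 0 ≤ C := (abs_nonneg _).trans (hinc 0)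
  have hbound : ∀ᶠ m : ℕ in atTop,
      ‖M m / m‖ ≤ |M (m.sqrt ^ 2) / (m.sqrt : ℝ) ^ 2| + 2 * C / m.sqrt := by
    filter_upwards [eventually_ge_atTop 1] with m hm
    set k := m.sqrt
    have hk : (0 : ℝ) < k := by exact_mod_cast Nat.sqrt_pos.2 hm
    have hkm : k ^ 2 ≤ m := Nat.sqrt_le' m
    have hgap : ((m - k ^ 2 : ℕ) : ℝ) ≤ 2 * k := by
      have h1 : m < (k + 1) ^ 2 := Nat.lt_succ_sqrt' m
      have h2 : (k + 1) ^ 2 = k ^ 2 + 2 * k + 1 := by ring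
      exact_mod_cast (by omega : m - k ^ 2 ≤ 2 * k)
    have hstep := abs_sub_le_mul_of_abs_succ_sub_le hinc hkm
    rw [Real.norm_eq_abs, abs_div, abs_div, Nat.abs_cast,
      abs_of_pos (by positivity : (0 : ℝ) < k ^ 2)]
    have hnum : |M m| ≤ |M (k ^ 2)| + 2 * C * k := by
      have := abs_sub_abs_le_abs_sub (M m) (M (k ^ 2))
      nlinarith
    calc |M m| / m ≤ (|M (k ^ 2)| + 2 * C * k) / k ^ 2 := by gcongr; exact_mod_cast hkm
      _ = |M (k ^ 2)| / k ^ 2 + 2 * C / k := by field_simp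
  refine squeeze_zero_norm' hbound ?_
  simpa using (hsq.abs.comp hsqrt).add
    (tendsto_const_nhds.div_atTop (tendsto_natCast_atTop_atTop.comp hsqrt))

theorem eventually_abs_le_of_eq_add_mul_cesaro {a b : ℕ → ℝ} {α c ε : ℝ}
    (hab : ∀ n, a n = b n + α * (∑ k ∈ range n, a k) / n)
    (hb : Tendsto b atTop (𝓝 0)) (hc : ∀ᶠ n in atTop, |a n| ≤ c) (hε : 0 < ε) :
    ∀ᶠ n in atTop, |a n| ≤ |α| * c + ε := by
  set u : ℕ → ℝ := fun k => max (|a k| - c) 0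
  have hu : Tendsto u atTop (𝓝 0) :=
    tendsto_const_nhds.congr' (hc.mono fun k hk => (max_eq_right (by linarith)).symm)
  have hsmall : Tendsto (fun n : ℕ => |b n| + |α| * ((n⁻¹ : ℝ) * ∑ k ∈ range n, u k))
      atTop (𝓝 0) := by
    simpa using hb.abs.add (hu.cesaro.const_mul |α|)
  filter_upwards [eventually_ge_atTop 1, hsmall.eventually (gt_mem_nhds hε)] with n hn hnε
  have hnR : (0 : ℝ) < n := by exact_mod_cast hn
  have hmean : |(∑ k ∈ range n, a k) / n| ≤ c + (n⁻¹ : ℝ) * ∑ k ∈ range n, u k := by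
    rw [abs_div, Nat.abs_cast, div_le_iff₀ hnR]
    calc |∑ k ∈ range n, a k| ≤ ∑ k ∈ range n, (c + u k) :=
          (abs_sum_le_sum_abs _ _).trans (sum_le_sum fun k _ => by
            have := le_max_left (|a k| - c) 0; linarith)
      _ = (c + (n⁻¹ : ℝ) * ∑ k ∈ range n, u k) * n := by
          rw [sum_add_distrib, sum_const, card_range, nsmul_eq_mul]
          field_simp
  calc |a n| ≤ |b n| + |α| * |(∑ k ∈ range n, a k) / n| := by
        rw [hab n, mul_div_assoc, ← abs_mul]; exact abs_add_le _ _
    _ ≤ |b n| + |α| * (c + (n⁻¹ : ℝ) * ∑ k ∈ range n, u k) := by gcongr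
    _ ≤ |α| * c + ε := by linarith

theorem tendsto_zero_of_eq_add_mul_cesaro {a b : ℕ → ℝ} {α B : ℝ} (hα : |α| < 1)
    (hab : ∀ n, a n = b n + α * (∑ k ∈ range n, a k) / n)
    (hb : Tendsto b atTop (𝓝 0)) (hB : ∀ n, |a n| ≤ B) :
    Tendsto a atTop (𝓝 0) := by
  set β := (1 + |α|) / 2 with hβ
  have hαβ : |α| < β := by linarith
  have hβ1 : β < 1 := by linarith
  have hB1 : 0 < B + 1 := by linarith [(abs_nonneg _).trans (hB 0)]
  have hcontract : ∀ j : ℕ, ∀ᶠ n in atTop, |a n| ≤ β ^ j * (B + 1) := by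
    intro j
    induction j with
    | zero => exact .of_forall fun n => by linarith [hB n]
    | succ j ih =>
      have hε : 0 < (β - |α|) * (β ^ j * (B + 1)) := by
        have : 0 < β := by linarith [abs_nonneg α]
        have : 0 < β - |α| := by linarith
        positivity
      refine (eventually_abs_le_of_eq_add_mul_cesaro hab hb ih hε).mono fun n hn => ?_
      linarith [show |α| * (β ^ j * (B + 1)) + (β - |α|) * (β ^ j * (B + 1)) =
        β ^ (j + 1) * (B + 1) by ring]
  have hpow : Tendsto (fun j : ℕ => β ^ j * (B + 1)) atTop (𝓝 0) := by
    simpa using (tendsto_pow_atTop_nhds_zero_of_lt_one (by linarith [abs_nonneg α]) hβ1).mul_const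
      (B + 1)
  refine NormedAddGroup.tendsto_nhds_zero.2 fun ε hε => ?_
  obtain ⟨j, hj⟩ := (hpow.eventually (gt_mem_nhds hε)).exists
  filter_upwards [hcontract j] with n hn
  rw [Real.norm_eq_abs]
  linarith

section Probability

variable {Ω : Type*} [m0 : MeasurableSpace Ω] {μ : Measure Ω}

theorem meas_abs_ge_le_integral_sq_div_sq [IsFiniteMeasure μ] {f : Ω → ℝ}
    (hf : Integrable (fun ω => f ω ^ 2) μ) {ε : ℝ} (hε : 0 < ε) :
    μ {ω | ε ≤ |f ω|} ≤ ENNReal.ofReal ((∫ ω, f ω ^ 2 ∂μ) / ε ^ 2) := by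
  have hmarkov := mul_meas_ge_le_integral_of_nonneg (ae_of_all _ fun ω => sq_nonneg (f ω)) hf
    (ε ^ 2)
  have hsub : {ω | ε ≤ |f ω|} ⊆ {ω | ε ^ 2 ≤ f ω ^ 2} := fun ω (hω : ε ≤ |f ω|) =>
    show ε ^ 2 ≤ f ω ^ 2 from sq_abs (f ω) ▸ pow_le_pow_left₀ hε.le hω 2
  calc μ {ω | ε ≤ |f ω|} ≤ μ {ω | ε ^ 2 ≤ f ω ^ 2} := measure_mono hsub
    _ = ENNReal.ofReal (μ.real {ω | ε ^ 2 ≤ f ω ^ 2}) :=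
      (ofReal_measureReal (measure_ne_top _ _)).symm
    _ ≤ ENNReal.ofReal ((∫ ω, f ω ^ 2 ∂μ) / ε ^ 2) := by
      gcongr
      rw [le_div_iff₀ (by positivity), mul_comm]
      exact hmarkov

theorem ae_tendsto_zero_of_tsum_measure_ne_top {f : ℕ → Ω → ℝ}
    (h : ∀ ε > 0, ∑' n, μ {ω | ε ≤ |f n ω|} ≠ ⊤) :
    ∀ᵐ ω ∂μ, Tendsto (fun n => f n ω) atTop (𝓝 0) := by
  have hj : ∀ᵐ ω ∂μ, ∀ j : ℕ, ∀ᶠ n in atTop, |f n ω| < 1 / ((j : ℝ) + 1) :=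
    ae_all_iff.2 fun j => (ae_eventually_notMem (h _ Nat.one_div_pos_of_nat)).mono
      fun ω hω => hω.mono fun n hn => not_le.1 hn
  filter_upwards [hj] with ω hω
  refine NormedAddGroup.tendsto_nhds_zero.2 fun ε hε => ?_
  obtain ⟨j, hjε⟩ := exists_nat_one_div_lt hε
  exact (hω j).mono fun n hn => hn.trans hjε

theorem ae_tendsto_div_sq_of_integral_sq_le [IsFiniteMeasure μ] {M : ℕ → Ω → ℝ} {K : ℝ}
    (hsq : ∀ n, Integrable (fun ω => M n ω ^ 2) μ) (hK : ∀ n, ∫ ω, M n ω ^ 2 ∂μ ≤ K * n) :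
    ∀ᵐ ω ∂μ, Tendsto (fun n : ℕ => M (n ^ 2) ω / (n : ℝ) ^ 2) atTop (𝓝 0) := by
  have hK0 : 0 ≤ K := by
    simpa using (integral_nonneg fun ω => sq_nonneg (M 1 ω)).trans (hK 1)
  refine ae_tendsto_zero_of_tsum_measure_ne_top fun ε hε => ?_
  have hcheb : ∀ n : ℕ, μ {ω | ε ≤ |M (n ^ 2) ω / (n : ℝ) ^ 2|} ≤
      ENNReal.ofReal (K / ε ^ 2 * (1 / (n : ℝ) ^ 2)) := by
    intro n
    have hsqn : Integrable (fun ω => (M (n ^ 2) ω / (n : ℝ) ^ 2) ^ 2) μ := by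
      simpa only [div_pow] using (hsq (n ^ 2)).div_const (((n : ℝ) ^ 2) ^ 2)
    refine (meas_abs_ge_le_integral_sq_div_sq hsqn hε).trans (ENNReal.ofReal_le_ofReal ?_)
    simp only [div_pow]
    rw [integral_div]
    rcases n.eq_zero_or_pos with rfl | hn
    · simp
    · have hnR : (0 : ℝ) < n := by exact_mod_cast hn
      have hKn : ∫ ω, M (n ^ 2) ω ^ 2 ∂μ ≤ K * (n : ℝ) ^ 2 := by exact_mod_cast hK (n ^ 2)
      rw [div_div, div_le_iff₀ (by positivity)]
      calc ∫ ω, M (n ^ 2) ω ^ 2 ∂μ ≤ K * n ^ 2 := hKn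
        _ = K / ε ^ 2 * (1 / n ^ 2) * (((n : ℝ) ^ 2) ^ 2 * ε ^ 2) := by field_simp
  have hsum : Summable fun n : ℕ => K / ε ^ 2 * (1 / (n : ℝ) ^ 2) :=
    (Real.summable_one_div_nat_pow.2 one_lt_two).mul_left _
  refine ne_top_of_le_ne_top ?_ (ENNReal.tsum_le_tsum hcheb)
  rw [← ENNReal.ofReal_tsum_of_nonneg (fun n => by positivity) hsum]
  exact ENNReal.ofReal_ne_top

theorem integral_sq_le_of_orthogonal_increments [IsProbabilityMeasure μ] {M : ℕ → Ω → ℝ}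
    {C : ℝ} (hM0 : M 0 = 0) (hmeas : ∀ n, AEStronglyMeasurable (M n) μ)
    (hinc : ∀ n ω, |M (n + 1) ω - M n ω| ≤ C)
    (horth : ∀ n, ∫ ω, M n ω * (M (n + 1) ω - M n ω) ∂μ = 0) (n : ℕ) :
    ∫ ω, M n ω ^ 2 ∂μ ≤ C ^ 2 * n := by
  have hbdd : ∀ n ω, |M n ω| ≤ C * n := fun n ω =>
    abs_le_mul_of_abs_succ_sub_le (M := fun k => M k ω) (by simp [hM0]) (fun k => hinc k ω) n
  induction n with
  | zero => simp [hM0]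
  | succ n ih =>
    set D := fun ω => M (n + 1) ω - M n ω
    have hD : AEStronglyMeasurable D μ := (hmeas (n + 1)).sub (hmeas n)
    have hsq : Integrable (fun ω => M n ω ^ 2) μ :=
      .of_bound ((hmeas n).pow 2) ((C * n) ^ 2) (ae_of_all _ fun ω => by
        rw [Real.norm_eq_abs, abs_pow]; exact pow_le_pow_left₀ (abs_nonneg _) (hbdd n ω) 2)
    have hMD : Integrable (M n * D) μ :=
      .of_bound ((hmeas n).mul hD) (C * n * C) (ae_of_all _ fun ω => by
        rw [Real.norm_eq_abs, Pi.mul_apply, abs_mul]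
        exact mul_le_mul (hbdd n ω) (hinc n ω) (abs_nonneg _) ((abs_nonneg _).trans (hbdd n ω)))
    have hcross : Integrable (fun ω => 2 * (M n ω * D ω)) μ := hMD.const_mul 2
    calc ∫ ω, M (n + 1) ω ^ 2 ∂μ
        ≤ ∫ ω, (M n ω ^ 2 + 2 * (M n ω * D ω) + C ^ 2) ∂μ := by
          refine integral_mono_of_nonneg (ae_of_all _ fun ω => sq_nonneg _)
            ((hsq.add hcross).add (integrable_const _)) (ae_of_all _ fun ω => ?_)
          have hDω : D ω ^ 2 ≤ C ^ 2 :=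
            sq_le_sq' (abs_le.1 (hinc n ω)).1 (abs_le.1 (hinc n ω)).2
          have : M (n + 1) ω = M n ω + D ω := by simp [D]
          simp only [this]
          nlinarith
      _ = ∫ ω, M n ω ^ 2 ∂μ + C ^ 2 := by
          have hsplit : ∫ ω, (M n ω ^ 2 + 2 * (M n ω * D ω) + C ^ 2) ∂μ =
              ∫ ω, M n ω ^ 2 ∂μ + ∫ ω, 2 * (M n ω * D ω) ∂μ + ∫ _ω, C ^ 2 ∂μ := by
            rw [integral_add (f := fun ω => M n ω ^ 2 + 2 * (M n ω * D ω)) (hsq.add hcross)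
              (integrable_const _), integral_add hsq hcross]
          rw [hsplit, integral_const_mul, horth n]
          simp
      _ ≤ C ^ 2 * (n + 1 : ℕ) := by push_cast; linarith

theorem integral_mul_eq_zero_of_condExp_eq_zero {m : MeasurableSpace Ω} (hm : m ≤ m0)
    [SigmaFinite (μ.trim hm)] {f g : Ω → ℝ} (hf : StronglyMeasurable[m] f)
    (hfg : Integrable (f * g) μ) (hg : Integrable g μ) (hg0 : μ[g | m] =ᵐ[μ] 0) :
    ∫ ω, f ω * g ω ∂μ = 0 := by
  have h : μ[f * g | m] =ᵐ[μ] 0 := by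
    filter_upwards [condExp_mul_of_stronglyMeasurable_left hf hfg hg, hg0] with ω h1 h2
    simp [h1, h2]
  calc ∫ ω, f ω * g ω ∂μ = ∫ ω, (μ[f * g | m]) ω ∂μ := (integral_condExp hm).symm
    _ = 0 := by simp [integral_congr_ae h]

theorem ae_tendsto_div_of_orthogonal_increments [IsProbabilityMeasure μ] {M : ℕ → Ω → ℝ}
    {C : ℝ} (hM0 : M 0 = 0) (hmeas : ∀ n, AEStronglyMeasurable (M n) μ)
    (hinc : ∀ n ω, |M (n + 1) ω - M n ω| ≤ C)
    (horth : ∀ n, ∫ ω, M n ω * (M (n + 1) ω - M n ω) ∂μ = 0) :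
    ∀ᵐ ω ∂μ, Tendsto (fun n : ℕ => M n ω / n) atTop (𝓝 0) := by
  have hsq : ∀ n, Integrable (fun ω => M n ω ^ 2) μ := fun n => by
    refine .of_bound ((hmeas n).pow 2) ((C * n) ^ 2) (ae_of_all _ fun ω => ?_)
    rw [Real.norm_eq_abs, abs_pow]
    exact pow_le_pow_left₀ (abs_nonneg _) (abs_le_mul_of_abs_succ_sub_le (M := fun k => M k ω)
      (by simp [hM0]) (fun k => hinc k ω) n) 2
  filter_upwards [ae_tendsto_div_sq_of_integral_sq_le hsq
    (integral_sq_le_of_orthogonal_increments hM0 hmeas hinc horth)] with ω hω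
  exact tendsto_div_of_tendsto_div_sq (fun n => hinc n ω) hω

end Probability

namespace ERWS

variable {Ω : Type*} [m0 : MeasurableSpace Ω] {μ : Measure Ω} {p q s : ℝ} (e : ERWS μ p q s)

theorem abs_X_le_one {n : ℕ} (hn : 1 ≤ n) (ω : Ω) : |e.X n ω| ≤ 1 := by
  rcases e.val_mem n hn ω with h | h | h <;> simp [h]

theorem abs_S_le (n : ℕ) (ω : Ω) : |e.S n ω| ≤ n :=
  (abs_sum_le_sum_abs _ _).trans <| by
    simpa using sum_le_sum fun k hk => e.abs_X_le_one (mem_Icc.1 hk).1 ω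

theorem abs_S_div_le_one (n : ℕ) (ω : Ω) : |e.S n ω / n| ≤ 1 := by
  rw [abs_div, Nat.abs_cast]
  exact div_le_one_of_le₀ (e.abs_S_le n ω) n.cast_nonneg

theorem S_succ (n : ℕ) (ω : Ω) : e.S (n + 1) ω = e.S n ω + e.X (n + 1) ω :=
  sum_Icc_succ_top (Nat.le_add_left 1 n) _

theorem stronglyMeasurable_S (n : ℕ) : StronglyMeasurable[e.F n] (e.S n) :=
  Finset.stronglyMeasurable_fun_sum _ fun k hk =>
    (e.adapted k (mem_Icc.1 hk).1).mono (e.F.mono (mem_Icc.1 hk).2)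

/-- `S n` minus the accumulated drift `∑_{k < n} E[X (k+1) | F k] = (p - q) ∑_{k < n} S k / k`
(the `k = 0` term is `0 / 0 = 0`). -/
def martingalePart (n : ℕ) (ω : Ω) : ℝ := e.S n ω - (p - q) * ∑ k ∈ range n, e.S k ω / k

theorem martingalePart_zero : e.martingalePart 0 = 0 := by
  funext ω; simp [martingalePart, S]

theorem martingalePart_succ_sub (n : ℕ) (ω : Ω) :
    e.martingalePart (n + 1) ω - e.martingalePart n ω =
      e.X (n + 1) ω - (p - q) * e.S n ω / n := by
  simp only [martingalePart, e.S_succ, sum_range_succ]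
  ring

theorem abs_martingalePart_succ_sub_le (hpq : |p - q| ≤ 1) (n : ℕ) (ω : Ω) :
    |e.martingalePart (n + 1) ω - e.martingalePart n ω| ≤ 2 := by
  have hdrift : |(p - q) * e.S n ω / n| ≤ 1 := by
    rw [mul_div_assoc, abs_mul]
    nlinarith [e.abs_S_div_le_one n ω, abs_nonneg (p - q), abs_nonneg (e.S n ω / n)]
  rw [martingalePart_succ_sub]
  linarith [abs_sub (e.X (n + 1) ω) ((p - q) * e.S n ω / n),
    e.abs_X_le_one (Nat.le_add_left 1 n) ω]

theorem stronglyMeasurable_martingalePart (n : ℕ) :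
    StronglyMeasurable[e.F n] (e.martingalePart n) :=
  (e.stronglyMeasurable_S n).sub <| stronglyMeasurable_const.mul <|
    Finset.stronglyMeasurable_fun_sum _ fun k hk =>
      ((e.stronglyMeasurable_S k).mono (e.F.mono (mem_range.1 hk).le)).div
        stronglyMeasurable_const

theorem condExp_martingalePart_succ_sub [IsFiniteMeasure μ] {n : ℕ} (hn : 1 ≤ n) :
    μ[fun ω => e.martingalePart (n + 1) ω - e.martingalePart n ω | e.F n] =ᵐ[μ] 0 := by
  set drift : Ω → ℝ := fun ω => (p - q) * e.S n ω / n
  have hdrift : StronglyMeasurable[e.F n] drift :=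
    (stronglyMeasurable_const.mul (e.stronglyMeasurable_S n)).div stronglyMeasurable_const
  have hX : Integrable (e.X (n + 1)) μ :=
    .of_bound ((e.adapted _ (Nat.le_add_left 1 n)).mono (e.F.le _)).aestronglyMeasurable 1
      (ae_of_all _ fun ω => e.abs_X_le_one (Nat.le_add_left 1 n) ω)
  have hdrift_int : Integrable drift μ :=
    .of_bound (hdrift.mono (e.F.le n)).aestronglyMeasurable (|p - q|)
      (ae_of_all _ fun ω => by
        rw [Real.norm_eq_abs, show drift ω = (p - q) * (e.S n ω / n) from mul_div_assoc ..,
          abs_mul]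
        exact mul_le_of_le_one_right (abs_nonneg _) (e.abs_S_div_le_one n ω))
  have hinc : (fun ω => e.martingalePart (n + 1) ω - e.martingalePart n ω) =
      e.X (n + 1) - drift :=
    funext (e.martingalePart_succ_sub n)
  rw [hinc]
  filter_upwards [condExp_sub hX hdrift_int (e.F n), e.cond_one n hn] with ω h1 h2
  rw [h1, condExp_of_stronglyMeasurable (e.F.le n) hdrift hdrift_int, Pi.sub_apply, h2]
  simp [drift, S]

theorem integral_martingalePart_mul_succ_sub [IsFiniteMeasure μ] (hpq : |p - q| ≤ 1) (n : ℕ) :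
    ∫ ω, e.martingalePart n ω * (e.martingalePart (n + 1) ω - e.martingalePart n ω) ∂μ = 0 := by
  rcases Nat.eq_zero_or_pos n with rfl | hn
  · simp [martingalePart_zero]
  have hmeas : ∀ k, AEStronglyMeasurable (e.martingalePart k) μ := fun k =>
    ((e.stronglyMeasurable_martingalePart k).mono (e.F.le k)).aestronglyMeasurable
  have hinc := e.abs_martingalePart_succ_sub_le hpq
  have hbdd : ∀ ω, |e.martingalePart n ω| ≤ 2 * n := fun ω =>
    abs_le_mul_of_abs_succ_sub_le (M := fun k => e.martingalePart k ω)
      (by simp [martingalePart_zero]) (fun k => hinc k ω) n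
  refine integral_mul_eq_zero_of_condExp_eq_zero (e.F.le n)
    (e.stronglyMeasurable_martingalePart n) ?_ ?_ (e.condExp_martingalePart_succ_sub hn)
  · refine .of_bound ((hmeas n).mul ((hmeas (n + 1)).sub (hmeas n))) (2 * n * 2)
      (ae_of_all _ fun ω => ?_)
    rw [Real.norm_eq_abs, Pi.mul_apply, abs_mul]
    exact mul_le_mul (hbdd ω) (hinc n ω) (abs_nonneg _) ((abs_nonneg _).trans (hbdd ω))
  · exact .of_bound ((hmeas (n + 1)).sub (hmeas n)) 2 (ae_of_all _ (hinc n))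

theorem S_div_eq_martingalePart_div_add (n : ℕ) (ω : Ω) : e.S n ω / n =
    e.martingalePart n ω / n + (p - q) * (∑ k ∈ range n, e.S k ω / k) / n := by
  rw [martingalePart]
  ring

end ERWS

theorem erws_diffusive_as_convergence_general
    {Ω : Type*} [m0 : MeasurableSpace Ω] {μ : Measure Ω} [IsProbabilityMeasure μ]
    {p q r s : ℝ} (hp : 0 ≤ p) (hq : 0 ≤ q) (hr0 : 0 < r)
    (hpqr : p + q + r = 1)
    (e : ERWS μ p q s) :
    ∀ᵐ ω ∂μ, Tendsto (fun n : ℕ => e.S n ω / n) atTop (𝓝 0) := by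
  have hpq : |p - q| < 1 := abs_lt.2 ⟨by linarith, by linarith⟩
  have hM := ae_tendsto_div_of_orthogonal_increments e.martingalePart_zero
    (fun n => ((e.stronglyMeasurable_martingalePart n).mono (e.F.le n)).aestronglyMeasurable)
    (e.abs_martingalePart_succ_sub_le hpq.le) (e.integral_martingalePart_mul_succ_sub hpq.le)
  filter_upwards [hM] with ω hω
  exact tendsto_zero_of_eq_add_mul_cesaro hpq (e.S_div_eq_martingalePart_div_add · ω) hω
    (e.abs_S_div_le_one · ω)

/-- in the diffusive regime `p/(1-r) < 3/4`, `S_n / n → 0` almost surely. -/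
theorem erws_diffusive_as_convergence
    {Ω : Type*} [m0 : MeasurableSpace Ω] {μ : Measure Ω} [IsProbabilityMeasure μ]
    {p q r s : ℝ} (hp : 0 ≤ p) (hq : 0 ≤ q) (hr0 : 0 < r) (hr1 : r < 1)
    (hpqr : p + q + r = 1) (hs0 : 0 ≤ s) (hs1 : s ≤ 1)
    (hdiff : p / (1 - r) < 3 / 4)
    (e : ERWS μ p q s) :
    ∀ᵐ ω ∂μ, Tendsto (fun n : ℕ => e.S n ω / n) atTop (𝓝 0) :=
  erws_diffusive_as_convergence_general (m0 := m0) hp hq hr0 hpqr e
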